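/- Let n ≥ 1, θ ∈ ℝⁿ, q ≥ 1 an integer, and let ν be the uniform probability measure on the unit ℓ¹-ball B₁ⁿ. Then ∫ |⟨x, θ⟩|^{2q} dν(x) ≤ C(n,q) · n! · (2q)! · α^{2q} / ((n+2q)! · n^q), where α = √n · ‖θ‖_∞ and C(n,q) = binom(n+q−1, n−1). -/

import Mathlib

/-!
Replace the ball by the Laplace weight `e^{-‖x‖₁}`. Since `⟨x, θ⟩^{2q}` is homogeneous of
degree `2q` and the sublevel sets of `‖x‖₁` are dilates of `B₁ⁿ`, writing
`e^{-‖x‖₁} = ∫_{r ≥ ‖x‖₁} e^{-r} dr` and swapping the integrals gives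
`∫ ⟨x, θ⟩^{2q} e^{-‖x‖₁} dx = (n + 2q)! ∫_{B₁ⁿ} ⟨x, θ⟩^{2q} dx`.
The Laplace weight is a product, so the multinomial expansion of `⟨x, θ⟩^{2q}` integrates term
by term into one-dimensional moments `∫ t^j e^{-|t|} dt`, which vanish for odd `j` and equal
`2 j!` for even `j`. Each of the `binom(n + q - 1, q)` surviving multi-indices `2k` contributes
`2ⁿ (2q)! ∏ θᵢ^{2kᵢ} ≤ 2ⁿ (2q)! ‖θ‖_∞^{2q}`; dividing by `vol B₁ⁿ = 2ⁿ / n!` gives the bound.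
-/

open MeasureTheory Real Set Module
open scoped Nat ENNReal

theorem integrable_of_integrableOn_Ioi_of_integrableOn_Ioi_comp_neg {F : Type*}
    [NormedAddCommGroup F] {f : ℝ → F} (hpos : IntegrableOn f (Ioi 0))
    (hneg : IntegrableOn (fun t => f (-t)) (Ioi 0)) : Integrable f := by
  have hIio : Integrable ((Iio 0).indicator f) := by
    have := ((integrable_indicator_iff measurableSet_Ioi).2 hneg).comp_neg
    convert this using 1
    ext t
    by_cases ht : t < 0 <;> simp [indicator, ht]
  have hIci : Integrable ((Ici 0).indicator f) :=
    (integrable_indicator_iff measurableSet_Ici).2 (by rwa [integrableOn_Ici_iff_integrableOn_Ioi])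
  simpa [← compl_Iio, indicator_self_add_compl] using hIio.add hIci

theorem integrableOn_pow_mul_exp_neg_Ioi (m : ℕ) :
    IntegrableOn (fun t : ℝ => t ^ m * exp (-t)) (Ioi 0) := by
  refine (GammaIntegral_convergent (s := m + 1) (by positivity)).congr_fun (fun t _ => ?_)
    measurableSet_Ioi
  simp [mul_comm]

theorem integral_pow_mul_exp_neg_Ioi (m : ℕ) : ∫ t in Ioi (0 : ℝ), t ^ m * exp (-t) = m ! := by
  rw [← Gamma_nat_eq_factorial, Gamma_eq_integral (by positivity)]
  exact setIntegral_congr_fun measurableSet_Ioi fun t _ => by simp [mul_comm]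

theorem lintegral_pow_mul_exp_neg_Ioi (m : ℕ) :
    ∫⁻ t in Ioi (0 : ℝ), ENNReal.ofReal (t ^ m * exp (-t)) = m ! := by
  rw [← ofReal_integral_eq_lintegral_ofReal (integrableOn_pow_mul_exp_neg_Ioi m)
    ((ae_restrict_iff' measurableSet_Ioi).2 (ae_of_all _ fun t (ht : 0 < t) => by positivity)),
    integral_pow_mul_exp_neg_Ioi, ENNReal.ofReal_natCast]

theorem lintegral_Ici_exp_neg (a : ℝ) :
    ∫⁻ t in Ici a, ENNReal.ofReal (exp (-t)) = ENNReal.ofReal (exp (-a)) := by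
  have hint : IntegrableOn (fun t : ℝ => exp (-t)) (Ioi a) := by
    simpa using exp_neg_integrableOn_Ioi a zero_lt_one
  rw [← Measure.restrict_congr_set Ioi_ae_eq_Ici, ← integral_exp_neg_Ioi,
    ofReal_integral_eq_lintegral_ofReal hint (ae_of_all _ fun t => (exp_pos _).le)]

theorem integrable_pow_mul_exp_neg_abs (j : ℕ) : Integrable fun t : ℝ => t ^ j * exp (-|t|) := by
  have hpos : IntegrableOn (fun t : ℝ => t ^ j * exp (-|t|)) (Ioi 0) :=
    (integrableOn_pow_mul_exp_neg_Ioi j).congr_fun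
      (fun t ht => by rw [abs_of_pos (mem_Ioi.1 ht)]) measurableSet_Ioi
  refine integrable_of_integrableOn_Ioi_of_integrableOn_Ioi_comp_neg hpos ?_
  refine (IntegrableOn.congr_fun (hpos.const_mul ((-1) ^ j)) (fun t _ => ?_) measurableSet_Ioi)
  simp only [neg_pow t, abs_neg]
  ring

theorem integral_pow_mul_exp_neg_abs_of_even {j : ℕ} (hj : Even j) :
    ∫ t : ℝ, t ^ j * exp (-|t|) = 2 * j ! := by
  calc ∫ t : ℝ, t ^ j * exp (-|t|) = ∫ t : ℝ, |t| ^ j * exp (-|t|) := by simp only [hj.pow_abs]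
    _ = 2 * j ! := by
      rw [integral_comp_abs (f := fun t => t ^ j * exp (-t)), integral_pow_mul_exp_neg_Ioi]

theorem integral_pow_mul_exp_neg_abs_of_odd {j : ℕ} (hj : Odd j) :
    ∫ t : ℝ, t ^ j * exp (-|t|) = 0 := by
  have h := integral_neg_eq_self (fun t : ℝ => t ^ j * exp (-|t|)) volume
  simp only [hj.neg_pow, abs_neg, neg_mul, integral_neg] at h
  linarith

section LaplaceProduct

variable {ι : Type*} [Fintype ι]

theorem integrable_prod_mul_pow_mul_exp_neg_abs (θ : ι → ℝ) (k : ι → ℕ) :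
    Integrable fun x : ι → ℝ => ∏ i, (x i * θ i) ^ k i * exp (-|x i|) := by
  refine Integrable.fintype_prod (f := fun i t => (t * θ i) ^ k i * exp (-|t|)) fun i => ?_
  convert (integrable_pow_mul_exp_neg_abs (k i)).const_mul (θ i ^ k i) using 1
  ext t
  ring

theorem integral_prod_mul_pow_mul_exp_neg_abs (θ : ι → ℝ) (k : ι → ℕ) :
    ∫ x : ι → ℝ, ∏ i, (x i * θ i) ^ k i * exp (-|x i|) =
      ∏ i, θ i ^ k i * ∫ t : ℝ, t ^ k i * exp (-|t|) := by
  rw [integral_fintype_prod_volume_eq_prod (fun i t => (t * θ i) ^ k i * exp (-|t|))]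
  refine Finset.prod_congr rfl fun i _ => ?_
  rw [← integral_const_mul]
  congr with t
  ring

variable [DecidableEq ι]

theorem pow_sum_mul_exp_neg_sum_abs (x θ : ι → ℝ) (m : ℕ) :
    (∑ i, x i * θ i) ^ m * exp (-∑ i, |x i|) =
      ∑ k ∈ Finset.piAntidiag Finset.univ m,
        (Nat.multinomial Finset.univ k : ℝ) * ∏ i, (x i * θ i) ^ k i * exp (-|x i|) := by
  rw [Finset.sum_pow_eq_sum_piAntidiag, Finset.sum_mul]
  refine Finset.sum_congr rfl fun k _ => ?_
  rw [← Finset.sum_neg_distrib, exp_sum, mul_assoc, ← Finset.prod_mul_distrib]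

theorem integral_pow_sum_mul_exp_neg_sum_abs (θ : ι → ℝ) (m : ℕ) :
    ∫ x : ι → ℝ, (∑ i, x i * θ i) ^ m * exp (-∑ i, |x i|) =
      ∑ k ∈ Finset.piAntidiag Finset.univ m,
        (Nat.multinomial Finset.univ k : ℝ) * ∏ i, θ i ^ k i * ∫ t : ℝ, t ^ k i * exp (-|t|) := by
  simp_rw [pow_sum_mul_exp_neg_sum_abs]
  rw [integral_finsetSum _ fun k _ => (integrable_prod_mul_pow_mul_exp_neg_abs θ k).const_mul _]
  simp_rw [integral_const_mul, integral_prod_mul_pow_mul_exp_neg_abs]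

theorem card_piAntidiag_univ (m : ℕ) :
    (Finset.piAntidiag (Finset.univ : Finset ι) m).card = (Fintype.card ι + m - 1).choose m := by
  rw [← Finset.map_sym_eq_piAntidiag, Finset.card_map, Finset.sym_univ, Finset.card_univ,
    Sym.card_sym_eq_choose (α := ι)]

theorem sum_multinomial_mul_prod_moments_le (θ : ι → ℝ) {M : ℝ} (hM : ∀ i, |θ i| ≤ M) (q : ℕ) :
    ∑ k ∈ Finset.piAntidiag Finset.univ (2 * q),
        (Nat.multinomial Finset.univ k : ℝ) * ∏ i, θ i ^ k i * ∫ t : ℝ, t ^ k i * exp (-|t|) ≤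
      (Fintype.card ι + q - 1).choose q * 2 ^ Fintype.card ι * (2 * q)! * M ^ (2 * q) := by
  set T : (ι → ℕ) → ℝ := fun k =>
    (Nat.multinomial Finset.univ k : ℝ) * ∏ i, θ i ^ k i * ∫ t : ℝ, t ^ k i * exp (-|t|)
  have h_even : ∀ k ∈ Finset.piAntidiag Finset.univ (2 * q), T k ≠ 0 → ∀ i, 2 ∣ k i := by
    intro k _ hTk i
    by_contra hi
    refine hTk (mul_eq_zero_of_right _ (Finset.prod_eq_zero (Finset.mem_univ i) ?_))
    rw [integral_pow_mul_exp_neg_abs_of_odd (Nat.not_even_iff_odd.1 (mt Even.two_dvd hi)),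
      mul_zero]
  have h_term : ∀ k ∈ Finset.piAntidiag Finset.univ q,
      T (2 • k) = 2 ^ Fintype.card ι * (2 * q)! * ∏ i, (θ i ^ 2) ^ k i := by
    intro k hk
    have hsum : ∑ i, (2 • k) i = 2 * q := by
      simp [← Finset.mul_sum, (Finset.mem_piAntidiag.1 hk).1]
    have hmult : (Nat.multinomial Finset.univ (2 • k) : ℝ) * ∏ i, (((2 • k) i)! : ℝ) =
        (2 * q)! := by
      rw [← hsum]
      exact_mod_cast (mul_comm _ _).trans (Nat.multinomial_spec _ _)
    have heven (i : ι) : Even ((2 • k) i) := ⟨k i, two_nsmul (k i)⟩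
    have hθ (i : ι) : θ i ^ (2 • k) i = (θ i ^ 2) ^ k i := by
      rw [Pi.smul_apply, smul_eq_mul, pow_mul]
    simp only [T, integral_pow_mul_exp_neg_abs_of_even (heven _), hθ, Finset.prod_mul_distrib,
      Finset.prod_const, Finset.card_univ, ← hmult]
    ring
  have h_le : ∀ k ∈ Finset.piAntidiag Finset.univ q, T (2 • k) ≤
      2 ^ Fintype.card ι * (2 * q)! * M ^ (2 * q) := by
    intro k hk
    rw [h_term k hk, ← (Finset.mem_piAntidiag.1 hk).1, pow_mul, ← Finset.prod_pow_eq_pow_sum]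
    have hθM (i : ι) : θ i ^ 2 ≤ M ^ 2 := by
      simpa only [sq_abs] using pow_le_pow_left₀ (abs_nonneg _) (hM i) 2
    gcongr 2 ^ _ * _ * ?_
    exact Finset.prod_le_prod (fun i _ => by positivity) fun i _ =>
      pow_le_pow_left₀ (sq_nonneg _) (hθM i) _
  calc ∑ k ∈ Finset.piAntidiag Finset.univ (2 * q), T k
      = ∑ k ∈ Finset.piAntidiag Finset.univ q, T (2 • k) := by
        rw [← Finset.sum_filter_of_ne h_even,
          ← Finset.map_nsmul_piAntidiag_univ q two_ne_zero, Finset.sum_map]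
        rfl
    _ ≤ (Finset.piAntidiag Finset.univ q).card •
          (2 ^ Fintype.card ι * (2 * q)! * M ^ (2 * q)) := Finset.sum_le_card_nsmul _ _ _ h_le
    _ = _ := by rw [card_piAntidiag_univ, nsmul_eq_mul]; ring

end LaplaceProduct

theorem lintegral_exp_neg_eq_factorial_mul {α : Type*} [MeasurableSpace α] (ρ : Measure α)
    [SFinite ρ] {N : α → ℝ} (hN : Measurable N) (hN₀ : ∀ x, 0 ≤ N x) {m : ℕ} {c : ℝ≥0∞}
    (hρ : ∀ r > 0, ρ {x | N x ≤ r} = ENNReal.ofReal (r ^ m) * c) :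
    ∫⁻ x, ENNReal.ofReal (exp (-N x)) ∂ρ = m ! * c := by
  have h_swap := lintegral_lintegral_swap (μ := ρ) (ν := volume)
    (f := fun x r => if N x ≤ r then ENNReal.ofReal (exp (-r)) else 0)
    ((Measurable.ite (measurableSet_le (hN.comp measurable_fst) measurable_snd)
      (by fun_prop) measurable_const).aemeasurable)
  have h_tail (x : α) : ∫⁻ r, (if N x ≤ r then ENNReal.ofReal (exp (-r)) else 0) =
      ENNReal.ofReal (exp (-N x)) := by
    rw [← lintegral_Ici_exp_neg, ← lintegral_indicator measurableSet_Ici]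
    rfl
  have h_layer (r : ℝ) : ∫⁻ x, (if N x ≤ r then ENNReal.ofReal (exp (-r)) else 0) ∂ρ =
      ρ {x | N x ≤ r} * ENNReal.ofReal (exp (-r)) := by
    rw [mul_comm, ← lintegral_indicator_const (measurableSet_le hN measurable_const)]
    rfl
  have h_supp : (fun r => ρ {x | N x ≤ r} * ENNReal.ofReal (exp (-r))).support ⊆ Ici 0 := by
    refine Function.support_subset_iff'.2 fun r hr => ?_
    have : {x | N x ≤ r} = ∅ := eq_empty_of_forall_notMem fun x hx =>
      hr (le_trans (hN₀ x) hx)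
    rw [this, measure_empty, zero_mul]
  simp only [h_tail, h_layer] at h_swap
  rw [h_swap, ← setLIntegral_eq_of_support_subset h_supp,
    Measure.restrict_congr_set Ioi_ae_eq_Ici.symm,
    setLIntegral_congr_fun measurableSet_Ioi fun r (hr : 0 < r) => by
      rw [hρ r hr, mul_right_comm, ← ENNReal.ofReal_mul (pow_nonneg hr.le _)],
    lintegral_mul_const _ (by fun_prop), lintegral_pow_mul_exp_neg_Ioi]

section Homogeneous

variable {E : Type*} [NormedAddCommGroup E] [NormedSpace ℝ E] [MeasurableSpace E] [BorelSpace E]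
  [FiniteDimensional ℝ E] (μ : Measure E) [μ.IsAddHaarMeasure] {N : E → ℝ} {d : ℕ}

theorem lintegral_comp_smul_of_pos {f : E → ℝ≥0∞} (hf : Measurable f) {r : ℝ} (hr : 0 < r) :
    ∫⁻ x, f (r • x) ∂μ = ENNReal.ofReal ((r ^ finrank ℝ E)⁻¹) * ∫⁻ x, f x ∂μ := by
  rw [← lintegral_map hf (measurable_const_smul r), Measure.map_addHaar_smul μ hr.ne',
    lintegral_smul_measure, smul_eq_mul, abs_of_pos (by positivity)]

theorem setLIntegral_sublevel_eq_pow_mul {P : E → ℝ≥0∞} (hP : Measurable P) (hN : Measurable N)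
    (hP_hom : ∀ r > 0, ∀ x, P (r • x) = ENNReal.ofReal (r ^ d) * P x)
    (hN_hom : ∀ r > 0, ∀ x, N (r • x) = r * N x) {r : ℝ} (hr : 0 < r) :
    ∫⁻ x in {x | N x ≤ r}, P x ∂μ =
      ENNReal.ofReal (r ^ (finrank ℝ E + d)) * ∫⁻ x in {x | N x ≤ 1}, P x ∂μ := by
  have hS (s : ℝ) : MeasurableSet {x | N x ≤ s} := measurableSet_le hN measurable_const
  have h_scale : ∀ x, {x | N x ≤ r}.indicator P (r • x) =
      {x | N x ≤ 1}.indicator (fun x => ENNReal.ofReal (r ^ d) * P x) x := by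
    intro x
    have hmem : N (r • x) ≤ r ↔ N x ≤ 1 := by
      rw [hN_hom r hr, mul_le_iff_le_one_right hr]
    simp only [indicator, mem_ofPred_eq, hmem, hP_hom r hr]
  have h := lintegral_comp_smul_of_pos μ (hP.indicator (hS r)) hr
  rw [lintegral_congr h_scale, lintegral_indicator (hS 1), lintegral_indicator (hS r),
    lintegral_const_mul _ hP] at h
  have h_inv : ENNReal.ofReal (r ^ finrank ℝ E) * ENNReal.ofReal ((r ^ finrank ℝ E)⁻¹) = 1 := by
    rw [← ENNReal.ofReal_mul (by positivity), mul_inv_cancel₀ (by positivity), ENNReal.ofReal_one]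
  rw [pow_add, ENNReal.ofReal_mul (by positivity), mul_assoc, h, ← mul_assoc, h_inv, one_mul]

theorem lintegral_mul_exp_neg_eq_factorial_mul {P : E → ℝ≥0∞} (hP : Measurable P)
    (hN : Measurable N) (hN₀ : ∀ x, 0 ≤ N x)
    (hP_hom : ∀ r > 0, ∀ x, P (r • x) = ENNReal.ofReal (r ^ d) * P x)
    (hN_hom : ∀ r > 0, ∀ x, N (r • x) = r * N x) :
    ∫⁻ x, P x * ENNReal.ofReal (exp (-N x)) ∂μ =
      (finrank ℝ E + d)! * ∫⁻ x in {x | N x ≤ 1}, P x ∂μ := by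
  refine (lintegral_withDensity_eq_lintegral_mul μ hP
    (by fun_prop : Measurable fun x => ENNReal.ofReal (exp (-N x)))).symm.trans ?_
  refine lintegral_exp_neg_eq_factorial_mul _ hN hN₀ fun r hr => ?_
  rw [withDensity_apply _ (measurableSet_le hN measurable_const),
    setLIntegral_sublevel_eq_pow_mul μ hP hN hP_hom hN_hom hr]

theorem setIntegral_sublevel_eq_integral_mul_exp_neg_div {P : E → ℝ} (hP : Measurable P)
    (hP₀ : ∀ x, 0 ≤ P x) (hN : Measurable N) (hN₀ : ∀ x, 0 ≤ N x)
    (hP_hom : ∀ r > 0, ∀ x, P (r • x) = r ^ d * P x)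
    (hN_hom : ∀ r > 0, ∀ x, N (r • x) = r * N x) :
    ∫ x in {x | N x ≤ 1}, P x ∂μ = (∫ x, P x * exp (-N x) ∂μ) / (finrank ℝ E + d)! := by
  have h := lintegral_mul_exp_neg_eq_factorial_mul μ hP.ennreal_ofReal hN hN₀
    (fun r hr x => by rw [hP_hom r hr, ENNReal.ofReal_mul (by positivity)]) hN_hom
  simp only [← ENNReal.ofReal_mul (hP₀ _)] at h
  rw [integral_eq_lintegral_of_nonneg_ae (ae_of_all _ fun x => mul_nonneg (hP₀ x) (exp_pos _).le)
      (by fun_prop : Measurable fun x => P x * exp (-N x)).aestronglyMeasurable,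
    integral_eq_lintegral_of_nonneg_ae (ae_of_all _ hP₀) hP.aestronglyMeasurable, h,
    ENNReal.toReal_mul, ENNReal.toReal_natCast]
  field_simp

end Homogeneous

theorem volume_setOf_sum_abs_le_one {ι : Type*} [Fintype ι] [Nonempty ι] :
    volume {x : ι → ℝ | ∑ i, |x i| ≤ 1} =
      ENNReal.ofReal (2 ^ Fintype.card ι / (Fintype.card ι)!) := by
  have h := volume_sum_rpow_le (ι := ι) (p := 1) le_rfl 1
  simp only [rpow_one, div_one, ENNReal.ofReal_one, one_pow, one_mul] at h
  rw [h, one_add_one_eq_two, Gamma_two, mul_one, Gamma_nat_eq_factorial]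

theorem moment_bound_uniform_l1_ball_general (n : ℕ) (hn : 1 ≤ n) (q : ℕ)
    (θ : Fin n → ℝ) :
    ∫ x, |∑ i, x i * θ i| ^ (2 * q)
        ∂((volume {x : Fin n → ℝ | ∑ i, |x i| ≤ 1})⁻¹ •
          volume.restrict {x : Fin n → ℝ | ∑ i, |x i| ≤ 1}) ≤
      (Nat.choose (n + q - 1) (n - 1) : ℝ) * (Nat.factorial n : ℝ) *
        (Nat.factorial (2 * q) : ℝ) * (Real.sqrt n * (⨆ i, |θ i|)) ^ (2 * q) /
        ((Nat.factorial (n + 2 * q) : ℝ) * (n : ℝ) ^ q) := by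
  have : Nonempty (Fin n) := ⟨⟨0, hn⟩⟩
  set M := ⨆ i, |θ i|
  have hM (i : Fin n) : |θ i| ≤ M :=
    le_ciSup (f := fun i => |θ i|) (finite_range _).bddAbove i
  have h_ball : ∫ x in {x : Fin n → ℝ | ∑ i, |x i| ≤ 1}, (∑ i, x i * θ i) ^ (2 * q) =
      (∫ x : Fin n → ℝ, (∑ i, x i * θ i) ^ (2 * q) * exp (-∑ i, |x i|)) / (n + 2 * q)! := by
    have h := setIntegral_sublevel_eq_integral_mul_exp_neg_div (volume : Measure (Fin n → ℝ))
      (d := 2 * q) (P := fun x => (∑ i, x i * θ i) ^ (2 * q)) (N := fun x => ∑ i, |x i|)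
      (by fun_prop) (fun x => (even_two_mul q).pow_nonneg _) (by fun_prop)
      (fun x => Finset.sum_nonneg fun i _ => abs_nonneg _)
      (fun r _ x => by
        simp only [Pi.smul_apply, smul_eq_mul, mul_assoc, ← Finset.mul_sum, mul_pow])
      (fun r hr x => by
        simp only [Pi.smul_apply, smul_eq_mul, abs_mul, abs_of_pos hr, ← Finset.mul_sum])
    rwa [Module.finrank_fin_fun] at h
  have h_laplace : ∫ x : Fin n → ℝ, (∑ i, x i * θ i) ^ (2 * q) * exp (-∑ i, |x i|) ≤
      (n + q - 1).choose q * 2 ^ n * (2 * q)! * M ^ (2 * q) := by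
    simpa only [integral_pow_sum_mul_exp_neg_sum_abs, Fintype.card_fin] using
      sum_multinomial_mul_prod_moments_le θ hM q
  have h_vol : volume {x : Fin n → ℝ | ∑ i, |x i| ≤ 1} = ENNReal.ofReal (2 ^ n / n !) := by
    simpa only [Fintype.card_fin] using volume_setOf_sum_abs_le_one (ι := Fin n)
  have h_choose : (n + q - 1).choose (n - 1) = (n + q - 1).choose q :=
    Nat.choose_symm_of_eq_add (by omega)
  simp only [integral_smul_measure, (even_two_mul q).pow_abs]
  rw [h_ball, h_vol, h_choose, ENNReal.toReal_inv, ENNReal.toReal_ofReal (by positivity),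
    smul_eq_mul, mul_pow, pow_mul, sq_sqrt (Nat.cast_nonneg n)]
  refine (mul_le_mul_of_nonneg_left (div_le_div_of_nonneg_right h_laplace (by positivity))
    (by positivity)).trans_eq ?_
  field_simp

/-- Moment bound for linear functionals with respect to the uniform probability
measure on the unit `ℓ¹`-ball: for `α = √n·‖θ‖_∞`,
`∫ |⟨x,θ⟩|^{2q} dν ≤ binom(n+q−1, n−1)·n!·(2q)!·α^{2q} / ((n+2q)!·n^q)`. -/
theorem moment_bound_uniform_l1_ball (n : ℕ) (hn : 1 ≤ n) (q : ℕ) (hq : 1 ≤ q)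
    (θ : Fin n → ℝ) :
    ∫ x, |∑ i, x i * θ i| ^ (2 * q)
        ∂((volume {x : Fin n → ℝ | ∑ i, |x i| ≤ 1})⁻¹ •
          volume.restrict {x : Fin n → ℝ | ∑ i, |x i| ≤ 1}) ≤
      (Nat.choose (n + q - 1) (n - 1) : ℝ) * (Nat.factorial n : ℝ) *
        (Nat.factorial (2 * q) : ℝ) * (Real.sqrt n * (⨆ i, |θ i|)) ^ (2 * q) /
        ((Nat.factorial (n + 2 * q) : ℝ) * (n : ℝ) ^ q) :=
  moment_bound_uniform_l1_ball_general n hn q θ
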